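/- arXiv:1812.07359 — 5 statements merged into one kernel-verified Lean document; each statement's English description precedes it below -/
import Mathlib

section
/- Let T = (Q, Σ, δ) be an S̄-automaton (deterministic and invertible), let Q̃ = Q ⊔ Q̄ be the states of T together with its inverse automaton, and let u, x ∈ Σ* be such that every partial function p⃗∘ for p⃗ ∈ Q̃*·u is defined on all elements of Stab¹(u)·u∘x. Then |Q̃*∘ux| = |Q̃*∘u| · |Stab¹(u)·u∘x|, where Stab¹(u) = { q⃗ ∈ Q̃* : q⃗∘ defined on u and q⃗∘u = u } (including the empty sequence). -/
/-- An S-automaton: a deterministic, possibly partial, letter-to-letter transducer.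
`δ q a = some (b, p)` means there is a transition q --a/b--> p. Determinism is built in. -/
structure SAut (Q A : Type) where
  δ : Q → A → Option (A × Q)

namespace SAut

variable {Q A : Type}

/-- The run of the automaton starting in `q` on input `u`: output word and end state. -/
def run (T : SAut Q A) (q : Q) : List A → Option (List A × Q)
  | [] => some ([], q)
  | a :: as => (T.δ q a).bind fun bp => (T.run bp.2 as).map fun vr => (bp.1 :: vr.1, vr.2)

/-- The partial action `q ∘ u` of a single state on a word (the output of the run). -/
def act1 (T : SAut Q A) (q : Q) (u : List A) : Option (List A) := (T.run q u).map Prod.fst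

/-- The dual action `q · u` of a word on a single state (the end state of the run). -/
def dual1 (T : SAut Q A) (q : Q) (u : List A) : Option Q := (T.run q u).map Prod.snd

/-- The partial action of a state sequence on a word; the head of the list acts first
(so the list `[q₁, q₂, …, q_ℓ]` represents the composition `q_ℓ ∘ ⋯ ∘ q₂ ∘ q₁`). -/
def act (T : SAut Q A) : List Q → List A → Option (List A)
  | [], u => some u
  | q :: qs, u => (T.act1 q u).bind (T.act qs)

/-- The dual partial action of a word on a state sequence:
`ε · u = ε` and `(p⃗ q) · u = (p⃗ · (q ∘ u)) (q · u)` (head of the list acts first). -/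
def dual (T : SAut Q A) : List Q → List A → Option (List Q)
  | [], _ => some []
  | q :: qs, u =>
      (T.act1 q u).bind fun v =>
        (T.dual1 q u).bind fun qd =>
          (T.dual qs v).map fun rest => qd :: rest

/-- The orbit `Q* ∘ u` of a word under the partial action of all state sequences. -/
def orbit (T : SAut Q A) (u : List A) : Set (List A) := { v | ∃ l : List Q, T.act l u = some v }

/-- Completeness: every state has a transition for every input letter. -/
def Complete (T : SAut Q A) : Prop := ∀ q a, (T.δ q a).isSome

/-- Reversibility: every state has at most one incoming transition with a given input letter. -/
def Reversible (T : SAut Q A) : Prop :=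
  ∀ p p' a b b' q, T.δ p a = some (b, q) → T.δ p' a = some (b', q) → p = p'

/-- Invertibility (inverse-determinism): for every state and output letter there is
at most one transition with that output letter. -/
def Invertible (T : SAut Q A) : Prop :=
  ∀ q a a' b p p', T.δ q a = some (b, p) → T.δ q a' = some (b, p') → a = a'

/-- The disjoint union of two automata over the same alphabet. -/
def union (T₁ T₂ : SAut Q A) : SAut (Q ⊕ Q) A where
  δ s a := match s with
    | Sum.inl q => (T₁.δ q a).map fun bp => (bp.1, Sum.inl bp.2)
    | Sum.inr q => (T₂.δ q a).map fun bp => (bp.1, Sum.inr bp.2)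

open Classical in
/-- The inverse automaton: swap input and output labels on every transition.
(For an invertible automaton this is the deterministic inverse automaton.) -/
noncomputable def inv (T : SAut Q A) : SAut Q A where
  δ q b := if h : ∃ ap : A × Q, T.δ q ap.1 = some (b, ap.2) then some h.choose else none

/-- The union `T ⊔ T̄` of an automaton with its inverse; its states are `Q̃ = Q ⊔ Q̄`. -/
noncomputable def tilde (T : SAut Q A) : SAut (Q ⊕ Q) A := T.union T.inv

/-- `Stab¹(u)`: all state sequences (including the empty one) defined on `u` that fix `u`. -/
def stab1 (T : SAut Q A) (u : List A) : Set (List Q) := { l | T.act l u = some u }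

/-- `Stab(u)`: all nonempty state sequences defined on `u` that fix `u`. -/
def stab (T : SAut Q A) (u : List A) : Set (List Q) := { l | l ≠ [] ∧ T.act l u = some u }

/-- The shifted stabilizer `Stab¹(u) · u` as a set of state sequences. -/
def stab1Shift (T : SAut Q A) (u : List A) : Set (List Q) :=
  { l' | ∃ l ∈ T.stab1 u, T.dual l u = some l' }

/-- The orbit `Stab¹(u) · u ∘ x` of `x` under the shifted stabilizer. -/
def stab1ShiftOrbit (T : SAut Q A) (u x : List A) : Set (List A) :=
  { y | ∃ l' ∈ T.stab1Shift u, T.act l' x = some y }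

/-- The shifted stabilizer `Stab(u) · u ∘` as a set of partial functions on words. -/
def shiftedStabFun (T : SAut Q A) (u : List A) : Set (List A → Option (List A)) :=
  { f | ∃ l ∈ T.stab u, ∃ l', T.dual l u = some l' ∧ f = T.act l' }

end SAut


section Helpers

namespace SAut
variable {Q A : Type}

lemma run_nil (T : SAut Q A) (q : Q) : T.run q [] = some ([], q) := rfl

lemma run_cons (T : SAut Q A) (q : Q) (a : A) (as : List A) :
    T.run q (a :: as) =
      (T.δ q a).bind fun bp => (T.run bp.2 as).map fun vr => (bp.1 :: vr.1, vr.2) := rfl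

lemma run_append (T : SAut Q A) (q : Q) (u x : List A) :
    T.run q (u ++ x) = (T.run q u).bind fun vp =>
      (T.run vp.2 x).map fun wr => (vp.1 ++ wr.1, wr.2) := by
  induction u generalizing q with
  | nil =>
    simp only [List.nil_append, run_nil, Option.bind_some]
    cases h : T.run q x with
    | none => simp
    | some vr => simp
  | cons a as ih =>
    simp only [List.cons_append, run_cons]
    cases h : T.δ q a with
    | none => simp
    | some bp =>
      simp only [Option.bind_some, Option.bind_some, ih bp.2]
      cases h2 : T.run bp.2 as with
      | none => simp
      | some vr =>
        simp only [Option.bind_some, Option.map_map, Option.map_some]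
        cases h3 : T.run vr.2 x with
        | none => simp
        | some wr => simp [Function.comp]

lemma run_length (T : SAut Q A) {q : Q} {u v : List A} {p : Q}
    (h : T.run q u = some (v, p)) : v.length = u.length := by
  induction u generalizing q v with
  | nil =>
    rw [run_nil] at h
    cases h; rfl
  | cons a as ih =>
    rw [run_cons] at h
    cases hδ : T.δ q a with
    | none => rw [hδ] at h; simp at h
    | some bp =>
      simp only [hδ, Option.bind_some] at h
      cases h2 : T.run bp.2 as with
      | none => simp [h2] at h
      | some vr =>
        simp only [h2, Option.map_some] at h
        cases h
        simp [ih h2]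

lemma act1_length (T : SAut Q A) {q : Q} {u v : List A} (h : T.act1 q u = some v) :
    v.length = u.length := by
  unfold act1 at h
  cases h2 : T.run q u with
  | none => rw [h2] at h; simp at h
  | some vr =>
    rw [h2] at h
    simp at h
    subst h
    exact T.run_length (by rw [h2])

lemma act_length (T : SAut Q A) {l : List Q} {u v : List A} (h : T.act l u = some v) :
    v.length = u.length := by
  induction l generalizing u with
  | nil => cases h; rfl
  | cons q qs ih =>
    rw [act] at h
    cases h1 : T.act1 q u with
    | none => rw [h1] at h; simp at h
    | some v1 =>
      rw [h1] at h
      simp only [Option.bind_some] at h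
      rw [ih h, T.act1_length h1]

lemma act_state_append (T : SAut Q A) (l₁ l₂ : List Q) (u : List A) :
    T.act (l₁ ++ l₂) u = (T.act l₁ u).bind (T.act l₂) := by
  induction l₁ generalizing u with
  | nil => simp [act]
  | cons q qs ih =>
    simp only [List.cons_append, act]
    cases h : T.act1 q u with
    | none => simp
    | some v1 => simp [ih]

lemma dual_state_append (T : SAut Q A) (l₁ l₂ : List Q) (u : List A) :
    T.dual (l₁ ++ l₂) u = (T.act l₁ u).bind fun v =>
      (T.dual l₁ u).bind fun d₁ => (T.dual l₂ v).map (d₁ ++ ·) := by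
  induction l₁ generalizing u with
  | nil =>
    simp only [List.nil_append, act, dual, Option.bind_some]
    cases h : T.dual l₂ u with
    | none => simp
    | some d => simp
  | cons q qs ih =>
    simp only [List.cons_append, act, dual]
    cases h : T.run q u with
    | none => simp [act1, dual1, h]
    | some vp =>
      simp only [act1, dual1, h, Option.map_some, Option.bind_some]
      cases h2 : T.act qs vp.1 with
      | none => simp [ih, h2]
      | some w =>
        cases h3 : T.dual qs vp.1 with
        | none => simp [ih, h2, h3]
        | some d1 =>
          cases h4 : T.dual l₂ w with
          | none => simp [ih, h2, h3, h4]
          | some d2 => simp [ih, h2, h3, h4]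

lemma dual_isSome_of_act (T : SAut Q A) {l : List Q} {u v : List A}
    (h : T.act l u = some v) : (T.dual l u).isSome := by
  induction l generalizing u with
  | nil => simp [dual]
  | cons q qs ih =>
    rw [act] at h
    cases hr : T.run q u with
    | none => rw [act1, hr] at h; simp at h
    | some vp =>
      rw [act1, hr] at h
      simp only [Option.map_some, Option.bind_some] at h
      have := ih h
      rw [dual, act1, dual1, hr]
      simp only [Option.map_some, Option.bind_some]
      cases hd : T.dual qs vp.1 with
      | none => rw [hd] at this; simp at this
      | some d => simp

lemma act_word_append (T : SAut Q A) (l : List Q) (u x : List A) :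
    T.act l (u ++ x) = (T.act l u).bind fun v =>
      (T.dual l u).bind fun d => (T.act d x).map (v ++ ·) := by
  induction l generalizing u x with
  | nil =>
    simp [act, dual]
  | cons q qs ih =>
    simp only [act, dual, act1, dual1, T.run_append q u x]
    cases h : T.run q u with
    | none => simp
    | some vp =>
      simp only [Option.bind_some, Option.map_some]
      cases h2 : T.run vp.2 x with
      | none =>
        simp only [Option.map_none, Option.bind_none, Option.bind_fun_none]
        cases h3 : T.act qs vp.1 with
        | none => simp
        | some w =>
          cases h4 : T.dual qs vp.1 with
          | none => simp
          | some d =>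
            simp [act, act1, h2]
      | some wr =>
        simp only [Option.map_some, Option.bind_some, ih]
        cases h3 : T.act qs vp.1 with
        | none => simp
        | some w =>
          cases h4 : T.dual qs vp.1 with
          | none => simp
          | some d =>
            simp [act, act1, h2]


def swapS : Q ⊕ Q → Q ⊕ Q := Sum.elim Sum.inr Sum.inl

@[simp] lemma swapS_swapS (s : Q ⊕ Q) : swapS (swapS s) = s := by cases s <;> rfl

def linv (l : List (Q ⊕ Q)) : List (Q ⊕ Q) := (l.map swapS).reverse

@[simp] lemma linv_linv (l : List (Q ⊕ Q)) : linv (linv l) = l := by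
  simp only [linv, List.map_reverse, List.reverse_reverse, List.map_map]
  have : (swapS ∘ swapS : Q ⊕ Q → Q ⊕ Q) = id := by funext s; simp [Function.comp]
  simp [this]

lemma linv_nil : linv ([] : List (Q ⊕ Q)) = [] := rfl

lemma linv_cons (q : Q ⊕ Q) (l : List (Q ⊕ Q)) :
    linv (q :: l) = linv l ++ [swapS q] := by simp [linv]

lemma tilde_δ_swap {T : SAut Q A} (hinv : T.Invertible) {s t : Q ⊕ Q} {a b : A}
    (h : T.tilde.δ s a = some (b, t)) : T.tilde.δ (swapS s) b = some (a, swapS t) := by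
  cases s with
  | inl q =>
    have h' : (T.δ q a).map (fun bp => (bp.1, Sum.inl bp.2)) = some (b, t) := h
    cases hq : T.δ q a with
    | none => rw [hq] at h'; simp at h'
    | some bp =>
      rw [hq] at h'
      simp only [Option.map_some] at h'
      obtain ⟨rfl, rfl⟩ : bp.1 = b ∧ t = Sum.inl bp.2 := by
        cases h'; exact ⟨rfl, rfl⟩
      -- goal : T.tilde.δ (inr q) bp.1 = some (a, inr bp.2)
      show (T.inv.δ q bp.1).map (fun cp => (cp.1, Sum.inr cp.2)) = some (a, Sum.inr bp.2)
      have hex : ∃ ap : A × Q, T.δ q ap.1 = some (bp.1, ap.2) := ⟨(a, bp.2), hq⟩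
      have hδi : T.inv.δ q bp.1 = some hex.choose := dif_pos hex
      have hcs := hex.choose_spec
      have ha : hex.choose.1 = a := hinv q hex.choose.1 a bp.1 hex.choose.2 bp.2 hcs hq
      rw [ha] at hcs
      rw [hq] at hcs
      have hp : hex.choose.2 = bp.2 := by
        have := Option.some.inj hcs
        exact ((Prod.ext_iff.mp this).2).symm
      rw [hδi]
      simp only [Option.map_some]
      rw [← ha, ← hp]
  | inr q =>
    have h' : (T.inv.δ q a).map (fun cp => (cp.1, Sum.inr cp.2)) = some (b, t) := h
    cases hq : T.inv.δ q a with
    | none => rw [hq] at h'; simp at h'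
    | some cp =>
      rw [hq] at h'
      simp only [Option.map_some] at h'
      obtain ⟨rfl, rfl⟩ : cp.1 = b ∧ t = Sum.inr cp.2 := by cases h'; exact ⟨rfl, rfl⟩
      -- from hq, T.δ q cp.1 = some (a, cp.2)
      by_cases hex : ∃ ap : A × Q, T.δ q ap.1 = some (a, ap.2)
      · have hδi : T.inv.δ q a = some hex.choose := dif_pos hex
        rw [hδi] at hq
        have hcp := Option.some.inj hq
        have hcs := hex.choose_spec
        rw [hcp] at hcs
        show (T.δ q cp.1).map (fun bp => (bp.1, Sum.inl bp.2)) = some (a, Sum.inl cp.2)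
        rw [hcs]
        rfl
      · have : T.inv.δ q a = none := dif_neg hex
        rw [this] at hq; exact absurd hq (by simp)

lemma tilde_run_swap {T : SAut Q A} (hinv : T.Invertible) {s t : Q ⊕ Q} {u v : List A}
    (h : T.tilde.run s u = some (v, t)) :
    T.tilde.run (swapS s) v = some (u, swapS t) := by
  induction u generalizing s v with
  | nil =>
    rw [run_nil] at h
    cases h
    exact run_nil _ _
  | cons a as ih =>
    rw [run_cons] at h
    cases hδ : T.tilde.δ s a with
    | none => rw [hδ] at h; simp at h
    | some bp =>
      simp only [hδ, Option.bind_some] at h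
      cases h2 : T.tilde.run bp.2 as with
      | none => simp [h2] at h
      | some vr =>
        simp only [h2, Option.map_some] at h
        cases h
        have hδ' := tilde_δ_swap hinv (show T.tilde.δ s a = some (bp.1, bp.2) from hδ)
        have h2' := ih h2
        rw [run_cons, hδ']
        simp only [Option.bind_some, h2', Option.map_some]

lemma tilde_act1_swap {T : SAut Q A} (hinv : T.Invertible) {s : Q ⊕ Q} {u v : List A}
    (h : T.tilde.act1 s u = some v) : T.tilde.act1 (swapS s) v = some u := by
  unfold act1 at h ⊢
  cases hr : T.tilde.run s u with
  | none => rw [hr] at h; simp at h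
  | some vp =>
    rw [hr] at h
    simp only [Option.map_some] at h
    have h2 := tilde_run_swap hinv (show T.tilde.run s u = some (vp.1, vp.2) from hr)
    have hv : vp.1 = v := Option.some.inj h
    rw [← hv, h2]
    rfl

lemma tilde_act_linv {T : SAut Q A} (hinv : T.Invertible) {l : List (Q ⊕ Q)} {u v : List A}
    (h : T.tilde.act l u = some v) : T.tilde.act (linv l) v = some u := by
  induction l generalizing u with
  | nil => cases h; rfl
  | cons q qs ih =>
    rw [act] at h
    cases h1 : T.tilde.act1 q u with
    | none => rw [h1] at h; simp at h
    | some u1 =>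
      simp only [h1, Option.bind_some] at h
      rw [linv_cons, act_state_append, ih h]
      simp only [Option.bind_some, act]
      rw [tilde_act1_swap hinv h1]
      rfl

lemma tilde_dual_linv {T : SAut Q A} (hinv : T.Invertible) {l d : List (Q ⊕ Q)} {u v : List A}
    (hact : T.tilde.act l u = some v) (hd : T.tilde.dual l u = some d) :
    T.tilde.dual (linv l) v = some (linv d) := by
  induction l generalizing u d with
  | nil =>
    cases hact; cases hd; rfl
  | cons q qs ih =>
    rw [act] at hact
    rw [dual] at hd
    cases hr : T.tilde.run q u with
    | none =>
      rw [act1, hr] at hact; simp at hact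
    | some vp =>
      simp only [act1, dual1, hr, Option.map_some, Option.bind_some] at hact hd
      cases hdd : T.tilde.dual qs vp.1 with
      | none => rw [hdd] at hd; simp at hd
      | some dd =>
        rw [hdd] at hd
        simp only [Option.map_some] at hd
        cases hd
        have hact' : T.tilde.act (linv qs) v = some vp.1 := tilde_act_linv hinv hact
        have hdd' : T.tilde.dual (linv qs) v = some (linv dd) := ih hact hdd
        rw [linv_cons, dual_state_append, hact', hdd']
        simp only [Option.bind_some]
        have hr' := tilde_run_swap hinv (show T.tilde.run q u = some (vp.1, vp.2) from hr)
        have : T.tilde.dual [swapS q] vp.1 = some [swapS vp.2] := by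
          rw [dual, act1, dual1, hr']
          rfl
        rw [this]
        simp [linv_cons]

lemma tilde_act_inj {T : SAut Q A} (hinv : T.Invertible) {l : List (Q ⊕ Q)} {y y' z : List A}
    (h : T.tilde.act l y = some z) (h' : T.tilde.act l y' = some z) : y = y' := by
  have h1 := tilde_act_linv hinv h
  have h2 := tilde_act_linv hinv h'
  rw [h1] at h2
  exact Option.some.inj h2

end SAut

end Helpers

/-- for an S̄-automaton, if every element of `Q̃* · u` is defined on every element
of `Stab¹(u) · u ∘ x`, then `|Q̃* ∘ ux| = |Q̃* ∘ u| · |Stab¹(u) · u ∘ x|`. -/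
theorem expanded_orbit_is_multiple {Q A : Type} [Fintype Q] [Fintype A]
    (T : SAut Q A) (hinv : T.Invertible) (u x : List A)
    (hdef : ∀ l' : List (Q ⊕ Q), (∃ l : List (Q ⊕ Q), T.tilde.dual l u = some l') →
      ∀ y ∈ T.tilde.stab1ShiftOrbit u x, (T.tilde.act l' y).isSome) :
    (T.tilde.orbit (u ++ x)).ncard =
      (T.tilde.orbit u).ncard * (T.tilde.stab1ShiftOrbit u x).ncard := by
  classical
  set S := T.tilde.stab1ShiftOrbit u x with hSdef
  have hxS : x ∈ S := ⟨[], ⟨[], rfl, rfl⟩, rfl⟩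
  have hch : ∀ v : ↥(T.tilde.orbit u), ∃ ld : List (Q ⊕ Q) × List (Q ⊕ Q),
      T.tilde.act ld.1 u = some v.1 ∧ T.tilde.dual ld.1 u = some ld.2 := by
    rintro ⟨v, l, hl⟩
    obtain ⟨d, hd⟩ := Option.isSome_iff_exists.mp (T.tilde.dual_isSome_of_act hl)
    exact ⟨(l, d), hl, hd⟩
  choose ld hld1 hld2 using hch
  have hgw : ∀ (v : ↥(T.tilde.orbit u)) (w : ↥S),
      ∃ z, T.tilde.act (ld v).2 w.1 = some z := by
    intro v w
    exact Option.isSome_iff_exists.mp (hdef (ld v).2 ⟨(ld v).1, hld2 v⟩ w.1 w.2)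
  choose gw hgwspec using hgw
  have hmem : ∀ (v : ↥(T.tilde.orbit u)) (w : ↥S),
      v.1 ++ gw v w ∈ T.tilde.orbit (u ++ x) := by
    intro v w
    obtain ⟨l', ⟨m, hm, hdm⟩, hl'x⟩ := w.2
    have hm' : T.tilde.act m u = some u := hm
    refine ⟨m ++ (ld v).1, ?_⟩
    rw [SAut.act_word_append]
    have hactu : T.tilde.act (m ++ (ld v).1) u = some v.1 := by
      rw [SAut.act_state_append, hm', Option.bind_some]
      exact hld1 v
    have hdualu : T.tilde.dual (m ++ (ld v).1) u = some (l' ++ (ld v).2) := by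
      rw [SAut.dual_state_append, hm', hdm]
      simp [hld2 v]
    rw [hactu, hdualu]
    simp only [Option.bind_some]
    rw [SAut.act_state_append, hl'x]
    simp [hgwspec v w]
  let g : ↥(T.tilde.orbit u) × ↥S → ↥(T.tilde.orbit (u ++ x)) :=
    fun p => ⟨p.1.1 ++ gw p.1 p.2, hmem p.1 p.2⟩
  have hginj : Function.Injective g := by
    rintro ⟨v₁, w₁⟩ ⟨v₂, w₂⟩ hgeq
    have heq : v₁.1 ++ gw v₁ w₁ = v₂.1 ++ gw v₂ w₂ := congrArg Subtype.val hgeq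
    have hlen : v₁.1.length = v₂.1.length := by
      rw [T.tilde.act_length (hld1 v₁), T.tilde.act_length (hld1 v₂)]
    obtain ⟨hv, hw⟩ := List.append_inj heq hlen
    have hvv : v₁ = v₂ := Subtype.ext hv
    subst hvv
    have h1 := hgwspec v₁ w₁
    have h2 := hgwspec v₁ w₂
    rw [hw] at h1
    have := SAut.tilde_act_inj hinv h1 h2
    exact Prod.ext rfl (Subtype.ext this)
  have hgsurj : Function.Surjective g := by
    rintro ⟨z, l, hl⟩
    rw [SAut.act_word_append] at hl
    cases hau : T.tilde.act l u with
    | none => rw [hau] at hl; simp at hl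
    | some v =>
      rw [hau] at hl
      simp only [Option.bind_some] at hl
      cases hdu : T.tilde.dual l u with
      | none => rw [hdu] at hl; simp at hl
      | some d =>
        rw [hdu] at hl
        simp only [Option.bind_some] at hl
        cases hax : T.tilde.act d x with
        | none => rw [hax] at hl; simp at hl
        | some w =>
          rw [hax] at hl
          simp only [Option.map_some] at hl
          have hz : v ++ w = z := Option.some.inj hl
          set V : ↥(T.tilde.orbit u) := ⟨v, l, hau⟩ with hV
          have hl₀ := hld1 V
          have hd₀ := hld2 V
          have hmu : T.tilde.act (l ++ SAut.linv (ld V).1) u = some u := by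
            rw [SAut.act_state_append, hau, Option.bind_some]
            exact SAut.tilde_act_linv hinv hl₀
          have hmdual : T.tilde.dual (l ++ SAut.linv (ld V).1) u
              = some (d ++ SAut.linv (ld V).2) := by
            rw [SAut.dual_state_append, hau, hdu]
            simp [(SAut.tilde_dual_linv hinv hl₀ hd₀ : T.tilde.dual (SAut.linv (ld V).1) v = some (SAut.linv (ld V).2))]
          have hdef' := hdef (d ++ SAut.linv (ld V).2) ⟨_, hmdual⟩ x hxS
          obtain ⟨w', hw'⟩ := Option.isSome_iff_exists.mp hdef'
          have hw'x : T.tilde.act (SAut.linv (ld V).2) w = some w' := by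
            rw [SAut.act_state_append, hax, Option.bind_some] at hw'
            exact hw'
          have hwS : w' ∈ S := ⟨d ++ SAut.linv (ld V).2, ⟨_, hmu, hmdual⟩, hw'⟩
          have hback : T.tilde.act (ld V).2 w' = some w := by
            have h := SAut.tilde_act_linv hinv hw'x
            rwa [SAut.linv_linv] at h
          refine ⟨(V, ⟨w', hwS⟩), ?_⟩
          apply Subtype.ext
          show V.1 ++ gw V ⟨w', hwS⟩ = z
          have h3 := hgwspec V ⟨w', hwS⟩
          rw [hback] at h3
          have : gw V ⟨w', hwS⟩ = w := (Option.some.inj h3).symm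
          rw [this]
          exact hz
  calc (T.tilde.orbit (u ++ x)).ncard
      = Nat.card ↥(T.tilde.orbit (u ++ x)) := (Nat.card_coe_set_eq _).symm
    _ = Nat.card (↥(T.tilde.orbit u) × ↥S) :=
        Nat.card_congr (Equiv.ofBijective g ⟨hginj, hgsurj⟩).symm
    _ = Nat.card ↥(T.tilde.orbit u) * Nat.card ↥S := Nat.card_prod _ _
    _ = (T.tilde.orbit u).ncard * S.ncard := by
        rw [Nat.card_coe_set_eq, Nat.card_coe_set_eq]
end

section
/- In the inverse semigroup generated by the S̄-automaton over {a, b} with transitions q →(a/b) p and p →(b/a) p, the shifted stabilizer of the word 'a' contains at least two distinct elements; in particular the elements p·p (the nowhere-defined zero) and p̄·p act differently as partial functions on {a,b}*, yet the word 'a' is not expandable. -/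
/-- The concrete S̄-automaton over `Σ = {a, b}` (encoded as `Fin 2`, `a = 0`, `b = 1`)
with states `q = 0`, `p = 1` and transitions `q --a/b--> p` and `p --b/a--> p`. -/
def Tex : SAut (Fin 2) (Fin 2) where
  δ q a :=
    if q = 0 ∧ a = 0 then some (1, 1)
    else if q = 1 ∧ a = 1 then some (0, 1)
    else none

section Aux

lemma inv_some {Q A : Type} (T : SAut Q A) (q : Q) (b a : A) (p : Q)
    (huniq : ∀ c : A × Q, T.δ q c.1 = some (b, c.2) → c = (a,p)) (h : T.δ q a = some (b,p)) :
    T.inv.δ q b = some (a,p) := by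
  have he : ∃ ap : A × Q, T.δ q ap.1 = some (b, ap.2) := ⟨(a,p), h⟩
  simp only [SAut.inv]
  rw [dif_pos he, huniq _ he.choose_spec]

lemma inv_none {Q A : Type} (T : SAut Q A) (q : Q) (b : A)
    (hn : ¬ ∃ ap : A × Q, T.δ q ap.1 = some (b, ap.2)) :
    T.inv.δ q b = none := by
  simp only [SAut.inv]
  rw [dif_neg hn]

lemma td_l00 : Tex.tilde.δ (Sum.inl 0) 0 = some (1, Sum.inl 1) := rfl
lemma td_l01 : Tex.tilde.δ (Sum.inl 0) 1 = none := rfl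
lemma td_l10 : Tex.tilde.δ (Sum.inl 1) 0 = none := rfl
lemma td_l11 : Tex.tilde.δ (Sum.inl 1) 1 = some (0, Sum.inl 1) := rfl
lemma td_r00 : Tex.tilde.δ (Sum.inr 0) 0 = none := by
  show (Tex.inv.δ 0 0).map _ = none
  rw [inv_none Tex 0 0 (by decide)]; rfl
lemma td_r01 : Tex.tilde.δ (Sum.inr 0) 1 = some (0, Sum.inr 1) := by
  show (Tex.inv.δ 0 1).map _ = _
  rw [inv_some Tex 0 1 0 1 (by decide) (by decide)]; rfl
lemma td_r10 : Tex.tilde.δ (Sum.inr 1) 0 = some (1, Sum.inr 1) := by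
  show (Tex.inv.δ 1 0).map _ = _
  rw [inv_some Tex 1 0 1 1 (by decide) (by decide)]; rfl
lemma td_r11 : Tex.tilde.δ (Sum.inr 1) 1 = none := by
  show (Tex.inv.δ 1 1).map _ = none
  rw [inv_none Tex 1 1 (by decide)]; rfl

lemma inv_spec {Q A : Type} (T : SAut Q A) {q : Q} {b a : A} {p : Q}
    (h : T.inv.δ q b = some (a, p)) : T.δ q a = some (b, p) := by
  simp only [SAut.inv] at h
  split at h
  · next he =>
    injection h with h'
    have hs := he.choose_spec
    rw [h'] at hs
    exact hs
  · exact absurd h (by simp)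

lemma td_flip : ∀ (s : Fin 2 ⊕ Fin 2) (a b : Fin 2) (r : Fin 2 ⊕ Fin 2),
    Tex.tilde.δ s a = some (b, r) → b = 1 - a := by
  have l : ∀ (q a b p : Fin 2), Tex.δ q a = some (b, p) → b = 1 - a := by decide
  rintro (q | q) a b r h
  · have h' : (Tex.δ q a).map (fun bp => (bp.1, Sum.inl bp.2)) = some (b, r) := h
    rcases Option.map_eq_some_iff.mp h' with ⟨⟨b', p⟩, hd, he⟩
    injection he with he1 he2
    rw [← he1]
    exact l q a b' p hd
  · have h' : (Tex.inv.δ q a).map (fun bp => (bp.1, Sum.inr bp.2)) = some (b, r) := h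
    rcases Option.map_eq_some_iff.mp h' with ⟨⟨b', p⟩, hd, he⟩
    injection he with he1 he2
    rw [← he1]
    have key : ∀ x y : Fin 2, x = 1 - y → y = 1 - x := by decide
    exact key a b' (l q b' a p (inv_spec Tex hd))

lemma run_flip : ∀ (u : List (Fin 2)) (s : Fin 2 ⊕ Fin 2) (v : List (Fin 2)) (r : Fin 2 ⊕ Fin 2),
    Tex.tilde.run s u = some (v, r) → v = u.map (fun c => 1 - c) := by
  intro u
  induction u with
  | nil =>
    intro s v r h
    have h' : some (([] : List (Fin 2)), s) = some (v, r) := h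
    injection h' with h''
    injection h'' with e1 e2
    rw [← e1]
    rfl
  | cons a as ih =>
    intro s v r h
    have h' : (Tex.tilde.δ s a).bind
        (fun bp => (Tex.tilde.run bp.2 as).map fun vr => (bp.1 :: vr.1, vr.2)) = some (v, r) := h
    rcases Option.bind_eq_some_iff.mp h' with ⟨⟨b, s'⟩, hd, hrun⟩
    rcases Option.map_eq_some_iff.mp hrun with ⟨⟨w, r'⟩, hw, hv⟩
    have hb := td_flip s a b s' hd
    have hw' := ih s' w r' hw
    injection hv with e1 e2
    rw [← e1]
    simp [List.map_cons, hb, hw']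

lemma act1_flip {s u v} (h : Tex.tilde.act1 s u = some v) : v = u.map (fun c => 1 - c) := by
  unfold SAut.act1 at h
  rcases Option.map_eq_some_iff.mp h with ⟨⟨w, r⟩, hw, hv⟩
  rw [← hv]
  exact run_flip u s w r hw

lemma flip_flip' (u : List (Fin 2)) : (u.map (fun c => 1 - c)).map (fun c => 1 - c) = u := by
  rw [List.map_map]
  have : ((fun c : Fin 2 => 1 - c) ∘ fun c : Fin 2 => 1 - c) = id := by
    funext c; fin_cases c <;> rfl
  rw [this, List.map_id]

lemma act_mem : ∀ (l : List (Fin 2 ⊕ Fin 2)) (u v : List (Fin 2)),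
    Tex.tilde.act l u = some v → v = u ∨ v = u.map (fun c => 1 - c) := by
  intro l
  induction l with
  | nil =>
    intro u v h
    have h' : some u = some v := h
    injection h' with h''
    exact Or.inl h''.symm
  | cons s l ih =>
    intro u v h
    have h' : (Tex.tilde.act1 s u).bind (Tex.tilde.act l) = some v := h
    rcases Option.bind_eq_some_iff.mp h' with ⟨w, hw, hv⟩
    have hwf := act1_flip hw
    rcases ih _ _ hv with h1 | h1
    · right; rw [h1, hwf]
    · left; rw [h1, hwf, flip_flip']

lemma orbit_sub (u : List (Fin 2)) :
    Tex.tilde.orbit u ⊆ {u, u.map (fun c => 1 - c)} := by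
  rintro v ⟨l, hl⟩
  rcases act_mem l u v hl with h | h <;> simp [h]

lemma run_single {s : Fin 2 ⊕ Fin 2} {a b : Fin 2} {r : Fin 2 ⊕ Fin 2}
    (h : Tex.tilde.δ s a = some (b, r)) : Tex.tilde.run s [a] = some ([b], r) := by
  unfold SAut.run
  rw [h]
  rfl

lemma act1_single {s : Fin 2 ⊕ Fin 2} {a b : Fin 2} {r : Fin 2 ⊕ Fin 2}
    (h : Tex.tilde.δ s a = some (b, r)) : Tex.tilde.act1 s [a] = some [b] := by
  unfold SAut.act1
  rw [run_single h]
  rfl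

lemma dual1_single {s : Fin 2 ⊕ Fin 2} {a b : Fin 2} {r : Fin 2 ⊕ Fin 2}
    (h : Tex.tilde.δ s a = some (b, r)) : Tex.tilde.dual1 s [a] = some r := by
  unfold SAut.dual1
  rw [run_single h]
  rfl

lemma act1_none1 {s : Fin 2 ⊕ Fin 2} {a : Fin 2}
    (h : Tex.tilde.δ s a = none) : Tex.tilde.act1 s [a] = none := by
  unfold SAut.act1 SAut.run
  rw [h]
  rfl

lemma act_one {s1 : Fin 2 ⊕ Fin 2} {a b : Fin 2} {r1 : Fin 2 ⊕ Fin 2}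
    (h1 : Tex.tilde.δ s1 a = some (b, r1)) :
    Tex.tilde.act [s1] [a] = some [b] := by
  unfold SAut.act
  rw [act1_single h1]
  rfl

lemma act_one_none {s1 : Fin 2 ⊕ Fin 2} {a : Fin 2}
    (h1 : Tex.tilde.δ s1 a = none) :
    Tex.tilde.act [s1] [a] = none := by
  unfold SAut.act
  rw [act1_none1 h1]
  rfl

lemma act_two {s1 s2 : Fin 2 ⊕ Fin 2} {a b c : Fin 2} {r1 r2 : Fin 2 ⊕ Fin 2}
    (h1 : Tex.tilde.δ s1 a = some (b, r1)) (h2 : Tex.tilde.δ s2 b = some (c, r2)) :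
    Tex.tilde.act [s1, s2] [a] = some [c] := by
  show (Tex.tilde.act1 s1 [a]).bind (Tex.tilde.act [s2]) = some [c]
  rw [act1_single h1, Option.bind_some, act_one h2]

lemma act_two_none {s1 s2 : Fin 2 ⊕ Fin 2} {a b : Fin 2} {r1 : Fin 2 ⊕ Fin 2}
    (h1 : Tex.tilde.δ s1 a = some (b, r1)) (h2 : Tex.tilde.δ s2 b = none) :
    Tex.tilde.act [s1, s2] [a] = none := by
  show (Tex.tilde.act1 s1 [a]).bind (Tex.tilde.act [s2]) = none
  rw [act1_single h1, Option.bind_some, act_one_none h2]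

lemma dual_one {s2 : Fin 2 ⊕ Fin 2} {b c : Fin 2} {r2 : Fin 2 ⊕ Fin 2}
    (h2 : Tex.tilde.δ s2 b = some (c, r2)) :
    Tex.tilde.dual [s2] [b] = some [r2] := by
  unfold SAut.dual
  rw [act1_single h2, Option.bind_some, dual1_single h2, Option.bind_some]
  rfl

lemma dual_two {s1 s2 : Fin 2 ⊕ Fin 2} {a b c : Fin 2} {r1 r2 : Fin 2 ⊕ Fin 2}
    (h1 : Tex.tilde.δ s1 a = some (b, r1)) (h2 : Tex.tilde.δ s2 b = some (c, r2)) :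
    Tex.tilde.dual [s1, s2] [a] = some [r1, r2] := by
  show (Tex.tilde.act1 s1 [a]).bind (fun v => (Tex.tilde.dual1 s1 [a]).bind fun qd =>
      (Tex.tilde.dual [s2] v).map fun rest => qd :: rest) = some [r1, r2]
  rw [act1_single h1, Option.bind_some, dual1_single h1, Option.bind_some, dual_one h2]
  rfl

lemma orbit_a : Tex.tilde.orbit [0] = {[0], [1]} := by
  apply Set.Subset.antisymm
  · have := orbit_sub [0]
    simpa using this
  · rintro v (rfl | rfl)
    · exact ⟨[], rfl⟩
    · exact ⟨[Sum.inl 0], act_one td_l00⟩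

end Aux



/-- the shifted stabilizer of `a` contains the two distinct elements
`pp∘` (the nowhere-defined zero) and `p̄p∘`, yet `a` is not expandable.
(The list `[Sum.inl 1, Sum.inl 1]` is `pp` read with the first-acting state first,
and `[Sum.inl 1, Sum.inr 1]` is `p̄p`.) -/
theorem shifted_stabilizer_nontrivial_but_not_expandable :
    Tex.tilde.act [Sum.inl 1, Sum.inl 1] ∈ Tex.tilde.shiftedStabFun [0] ∧
    Tex.tilde.act [Sum.inl 1, Sum.inr 1] ∈ Tex.tilde.shiftedStabFun [0] ∧
    Tex.tilde.act [Sum.inl 1, Sum.inl 1] ≠ Tex.tilde.act [Sum.inl 1, Sum.inr 1] ∧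
    ∀ x : List (Fin 2),
      (Tex.tilde.orbit ([0] ++ x)).ncard ≤ (Tex.tilde.orbit [0]).ncard := by
  refine ⟨?_, ?_, ?_, ?_⟩
  · exact ⟨[Sum.inl 0, Sum.inl 1], ⟨by simp, act_two td_l00 td_l11⟩,
      [Sum.inl 1, Sum.inl 1], dual_two td_l00 td_l11, rfl⟩
  · exact ⟨[Sum.inl 0, Sum.inr 0], ⟨by simp, act_two td_l00 td_r01⟩,
      [Sum.inl 1, Sum.inr 1], dual_two td_l00 td_r01, rfl⟩
  · intro h
    have h1 := congrFun h [1]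
    rw [act_two_none td_l11 td_l10, act_two td_l11 td_r10] at h1
    exact absurd h1 (by simp)
  · intro x
    rw [orbit_a, Set.ncard_pair (by decide)]
    calc (Tex.tilde.orbit ([0] ++ x)).ncard
        ≤ ({[0] ++ x, ([0] ++ x).map (fun c => 1 - c)} : Set (List (Fin 2))).ncard :=
          Set.ncard_le_ncard (orbit_sub _) ((Set.finite_singleton _).insert _)
      _ ≤ 2 := by
          refine le_trans (Set.ncard_insert_le _ _) ?_
          simp
end

section
/- Let T = (Q, Σ, δ) be a complete and reversible S-automaton generating an infinite semigroup and let u ∈ Σ* with n = |Q*∘u|. Then u is expandable by a word x of length at most |Q|^n. -/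
namespace ExpandProof

open SAut

variable {Q A : Type} (T : SAut Q A) (hc : T.Complete)

/-- The total transition function of a complete automaton. -/
def step (q : Q) (a : A) : A × Q := (T.δ q a).get (hc q a)

lemma δ_eq_step (q : Q) (a : A) : T.δ q a = some (step T hc q a) :=
  (Option.some_get (hc q a)).symm

/-- Total version of `act1`. -/
def ac : Q → List A → List A
  | _, [] => []
  | q, a :: x => (step T hc q a).1 :: ac (step T hc q a).2 x

/-- Total version of `dual1`. -/
def du : Q → List A → Q
  | q, [] => q
  | q, a :: x => du (step T hc q a).2 x

lemma run_eq (q : Q) (x : List A) : T.run q x = some (ac T hc q x, du T hc q x) := by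
  induction x generalizing q with
  | nil => rfl
  | cons a x ih => simp [SAut.run, δ_eq_step T hc q a, ih, ac, du]

/-- Total version of `act`. -/
def B : List Q → List A → List A
  | [], x => x
  | q :: m, x => B m (ac T hc q x)

/-- Total version of `dual`. -/
def D : List Q → List A → List Q
  | [], _ => []
  | q :: m, x => du T hc q x :: D m (ac T hc q x)

lemma act_eq (m : List Q) (x : List A) : T.act m x = some (B T hc m x) := by
  induction m generalizing x with
  | nil => rfl
  | cons q m ih => simp [SAut.act, SAut.act1, run_eq T hc, ih, B]

lemma ac_length (q : Q) (x : List A) : (ac T hc q x).length = x.length := by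
  induction x generalizing q with
  | nil => rfl
  | cons a x ih => simp [ac, ih]

lemma B_length (m : List Q) (x : List A) : (B T hc m x).length = x.length := by
  induction m generalizing x with
  | nil => rfl
  | cons q m ih => simp [B, ih, ac_length]

lemma B_nil (m : List Q) : B T hc m [] = [] := by
  induction m with
  | nil => rfl
  | cons q m ih => simpa [B, ac] using ih

lemma ac_append (q : Q) (x y : List A) :
    ac T hc q (x ++ y) = ac T hc q x ++ ac T hc (du T hc q x) y := by
  induction x generalizing q with
  | nil => simp [ac, du]
  | cons a x ih => simp [ac, du, ih]

lemma B_append (m : List Q) (x y : List A) :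
    B T hc m (x ++ y) = B T hc m x ++ B T hc (D T hc m x) y := by
  induction m generalizing x y with
  | nil => simp [B, D]
  | cons q m ih => simp [B, D, ac_append, ih]

lemma orbit_eq (x : List A) : T.orbit x = Set.range fun m => B T hc m x := by
  ext v
  constructor
  · rintro ⟨l, hl⟩
    rw [act_eq T hc] at hl
    exact ⟨l, Option.some_injective _ hl⟩
  · rintro ⟨l, rfl⟩
    exact ⟨l, act_eq T hc l x⟩

lemma orbit_finite [Finite A] (hc : T.Complete) (x : List A) : (T.orbit x).Finite := by
  apply (List.finite_length_eq A x.length).subset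
  rintro v ⟨l, hl⟩
  rw [act_eq T hc] at hl
  obtain rfl : B T hc l x = v := Option.some_injective _ hl
  exact B_length T hc l x

lemma step_inj (hrev : T.Reversible) (a : A) :
    Function.Injective fun q => (step T hc q a).2 := by
  intro p p' h
  simp only at h
  refine hrev p p' a (step T hc p a).1 (step T hc p' a).1 (step T hc p a).2 ?_ ?_
  · rw [δ_eq_step T hc]
  · rw [h, δ_eq_step T hc]

lemma du_inj (hrev : T.Reversible) (x : List A) :
    Function.Injective fun q => du T hc q x := by
  induction x with
  | nil => exact fun p p' h => h
  | cons a x ih =>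
    intro p p' h
    simp only [du] at h
    exact step_inj T hc hrev a (ih h)

lemma du_surj [Finite Q] (hrev : T.Reversible) (x : List A) :
    Function.Surjective fun q => du T hc q x :=
  Finite.surjective_of_injective (du_inj T hc hrev x)

lemma D_surj [Finite Q] (hrev : T.Reversible) (x : List A) (m : List Q) :
    ∃ l, D T hc l x = m := by
  induction m generalizing x with
  | nil => exact ⟨[], rfl⟩
  | cons q' m ih =>
    obtain ⟨q, hq⟩ := du_surj T hc hrev x q'
    obtain ⟨l, hl⟩ := ih (ac T hc q x)
    exact ⟨q :: l, by simp only [D]; rw [hl]; exact congrArg (· :: m) hq⟩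

/-- Agreement of the actions of two state sequences on all words of length at most `k`. -/
def Ek (k : ℕ) (m1 m2 : List Q) : Prop :=
  ∀ x : List A, x.length ≤ k → B T hc m1 x = B T hc m2 x

lemma Ek_refl (k : ℕ) (m : List Q) : Ek T hc k m m := fun _ _ => rfl

lemma Ek_symm {k : ℕ} {m1 m2 : List Q} (h : Ek T hc k m1 m2) : Ek T hc k m2 m1 :=
  fun x hx => (h x hx).symm

lemma Ek_trans {k : ℕ} {m1 m2 m3 : List Q} (h1 : Ek T hc k m1 m2) (h2 : Ek T hc k m2 m3) :
    Ek T hc k m1 m3 := fun x hx => (h1 x hx).trans (h2 x hx)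

lemma Ek_anti {k j : ℕ} (h : k ≤ j) {m1 m2 : List Q} (hE : Ek T hc j m1 m2) :
    Ek T hc k m1 m2 := fun x hx => hE x (hx.trans h)

lemma Ek_head {k : ℕ} {m1 m2 : List Q} (h : Ek T hc (k + 1) m1 m2) (a : A) :
    B T hc m1 [a] = B T hc m2 [a] :=
  h [a] (by simp)

lemma Ek_deriv {k : ℕ} {m1 m2 : List Q} (h : Ek T hc (k + 1) m1 m2) (a : A) :
    Ek T hc k (D T hc m1 [a]) (D T hc m2 [a]) := by
  intro x hx
  have h1 := h ([a] ++ x) (by simpa using Nat.succ_le_succ hx)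
  rw [B_append, B_append, Ek_head T hc h a] at h1
  exact List.append_cancel_left h1

lemma Ek_succ_of {k : ℕ} {m1 m2 : List Q} (h1 : ∀ a, B T hc m1 [a] = B T hc m2 [a])
    (h2 : ∀ a, Ek T hc k (D T hc m1 [a]) (D T hc m2 [a])) : Ek T hc (k + 1) m1 m2 := by
  intro x hx
  match x with
  | [] => simp [B_nil]
  | a :: x' =>
    have hax : a :: x' = [a] ++ x' := rfl
    rw [hax, B_append, B_append, h1 a,
      h2 a x' (by simpa using Nat.le_of_succ_le_succ hx)]

/-- The equivalence `Ek k` does not get refined when passing from `k` to `k+1`. -/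
def StabAt (k : ℕ) : Prop := ∀ m1 m2, Ek T hc k m1 m2 → Ek T hc (k + 1) m1 m2

lemma StabAt.succ {k : ℕ} (h : StabAt T hc k) : StabAt T hc (k + 1) := by
  intro m1 m2 h12
  exact Ek_succ_of T hc (fun a => Ek_head T hc h12 a)
    (fun a => h _ _ (Ek_deriv T hc h12 a))

lemma StabAt.all {k : ℕ} (h : StabAt T hc k) {m1 m2 : List Q} (hE : Ek T hc k m1 m2) :
    ∀ x, B T hc m1 x = B T hc m2 x := by
  have hsj : ∀ j, StabAt T hc (k + j) := by
    intro j
    induction j with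
    | zero => exact h
    | succ j ih => exact ih.succ
  have key : ∀ j, Ek T hc (k + j) m1 m2 := by
    intro j
    induction j with
    | zero => exact hE
    | succ j ih => exact hsj j _ _ ih
  intro x
  exact key x.length x (Nat.le_add_left _ _)

lemma ac_subsingleton [Subsingleton Q] (q0 q : Q) (x : List A) :
    ac T hc q x = x.map fun a => (step T hc q0 a).1 := by
  induction x generalizing q with
  | nil => rfl
  | cons a x ih =>
    have hq : q = q0 := Subsingleton.elim q q0
    subst hq
    simp [ac, ih]

lemma B_subsingleton [Subsingleton Q] (q0 : Q) (m : List Q) (x : List A) :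
    B T hc m x = x.map ((fun a => (step T hc q0 a).1)^[m.length]) := by
  induction m generalizing x with
  | nil => simp [B]
  | cons q m ih =>
    rw [show B T hc (q :: m) x = B T hc m (ac T hc q x) from rfl,
      ac_subsingleton T hc q0 q x, ih, List.map_map, List.length_cons,
      Function.iterate_succ]

lemma semigroup_finite_of_card_le_one [Fintype Q] [Finite A] (hc : T.Complete)
    (hQ : Fintype.card Q ≤ 1) :
    {f : List A → Option (List A) | ∃ l : List Q, l ≠ [] ∧ f = T.act l}.Finite := by
  have hsub : Subsingleton Q := Fintype.card_le_one_iff_subsingleton.mp hQ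
  rcases isEmpty_or_nonempty Q with hemp | ⟨⟨q0⟩⟩
  · apply Set.finite_empty.subset
    rintro f ⟨l, hl, rfl⟩
    cases l with
    | nil => exact absurd rfl hl
    | cons q l => exact (hemp.false q).elim
  · apply (Set.finite_range fun (τ : A → A) => fun x : List A => some (x.map τ)).subset
    rintro f ⟨l, hl, rfl⟩
    refine ⟨(fun a => (step T hc q0 a).1)^[l.length], ?_⟩
    funext x
    rw [act_eq T hc, B_subsingleton T hc q0]

end ExpandProof

/-- in the setting of the previous theorem, `u` is expandable by a word of
length at most `|Q|^n` where `n = |Q* ∘ u|`. -/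
theorem expandable_reversible_complete_bound {Q A : Type} [Fintype Q] [Fintype A]
    (T : SAut Q A) (hc : T.Complete) (hrev : T.Reversible)
    (hinf : {f : List A → Option (List A) | ∃ l : List Q, l ≠ [] ∧ f = T.act l}.Infinite)
    (u : List A) :
    ∃ x : List A, x.length ≤ Fintype.card Q ^ (T.orbit u).ncard ∧
      (T.orbit u).ncard < (T.orbit (u ++ x)).ncard := by
  classical
  open ExpandProof in
  by_contra hcon
  push_neg at hcon
  set n := (T.orbit u).ncard with hn
  set K := Fintype.card Q ^ n with hK
  -- the alphabet automaton has at least two states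
  have hQ2 : 2 ≤ Fintype.card Q := by
    by_contra hq
    exact hinf (semigroup_finite_of_card_le_one T hc (by omega))
  have hnK : n < K := lt_of_lt_of_le (Nat.lt_two_pow_self (n := n)) (Nat.pow_le_pow_left hQ2 n)
  have horbfin : ∀ w : List A, (T.orbit w).Finite := orbit_finite T hc
  -- the orbit of `u` is the image of the orbit of `u ++ x` under taking prefixes
  have htake : ∀ l : List Q, ∀ x, List.take u.length (B T hc l (u ++ x)) = B T hc l u := by
    intro l x
    rw [B_append, ← B_length T hc l u, List.take_left]
  have hge : ∀ x, T.orbit u = List.take u.length '' T.orbit (u ++ x) := by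
    intro x
    rw [orbit_eq T hc, orbit_eq T hc]
    ext v
    simp only [Set.mem_range, Set.mem_image]
    constructor
    · rintro ⟨m, rfl⟩
      exact ⟨B T hc m (u ++ x), ⟨m, rfl⟩, htake m x⟩
    · rintro ⟨w, ⟨m, rfl⟩, rfl⟩
      exact ⟨m, (htake m x).symm⟩
  -- key consequence of non-expandability by short words
  have hKey : ∀ l1 l2 : List Q, B T hc l1 u = B T hc l2 u →
      Ek T hc K (D T hc l1 u) (D T hc l2 u) := by
    intro l1 l2 h12 x hx
    have h1 : n ≤ (T.orbit (u ++ x)).ncard := by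
      rw [hn, hge x]
      exact Set.ncard_image_le (horbfin _)
    have hEq : (List.take u.length '' T.orbit (u ++ x)).ncard = (T.orbit (u ++ x)).ncard := by
      rw [← hge x, ← hn]
      exact le_antisymm h1 (hcon x hx)
    have hinj : Set.InjOn (List.take u.length) (T.orbit (u ++ x)) :=
      Set.injOn_of_ncard_image_eq hEq (horbfin _)
    have hv1 : B T hc l1 (u ++ x) ∈ T.orbit (u ++ x) := by
      rw [orbit_eq T hc]; exact ⟨l1, rfl⟩
    have hv2 : B T hc l2 (u ++ x) ∈ T.orbit (u ++ x) := by
      rw [orbit_eq T hc]; exact ⟨l2, rfl⟩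
    have heq := hinj hv1 hv2 (by rw [htake, htake, h12])
    rw [B_append, B_append, h12] at heq
    exact List.append_cancel_left heq
  -- a section of the surjective dual action on state sequences
  choose s hs using D_surj T hc hrev u
  set ι : List Q → List A := fun m => B T hc (s m) u with hιdef
  have hι : ∀ m1 m2, ι m1 = ι m2 → Ek T hc K m1 m2 := by
    intro m1 m2 h
    have := hKey (s m1) (s m2) h
    rwa [hs, hs] at this
  set I : Set (List A) := Set.range ι with hIdef
  have hIsub : I ⊆ T.orbit u := by
    rintro v ⟨m, rfl⟩
    rw [orbit_eq T hc]
    exact ⟨s m, rfl⟩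
  have hIfin : I.Finite := (horbfin u).subset hIsub
  haveI hIfin' : Finite I := hIfin.to_subtype
  have hIcard : Nat.card I ≤ n := by
    rw [Nat.card_coe_set_eq]
    exact Set.ncard_le_ncard hIsub (horbfin u)
  have hsig : ∀ v : I, ∃ m, ι m = (v : List A) := fun v => v.2
  choose σ hσ using hsig
  have htr : ∀ k ≤ K, ∀ m : List Q, Ek T hc k m (σ ⟨ι m, Set.mem_range_self m⟩) := by
    intro k hk m
    exact Ek_anti T hc hk (Ek_symm T hc (hι _ _ (hσ ⟨ι m, Set.mem_range_self m⟩)))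
  -- the chain of equivalence relations and its cardinalities
  let sk : ℕ → Setoid I := fun k =>
    ⟨fun v w => Ek T hc k (σ v) (σ w),
     ⟨fun v => Ek_refl T hc k (σ v), fun h => Ek_symm T hc h,
      fun h1 h2 => Ek_trans T hc h1 h2⟩⟩
  let c : ℕ → ℕ := fun k => Nat.card (Quotient (sk k))
  have hcle : ∀ k, c k ≤ n := by
    intro k
    refine le_trans (Nat.card_le_card_of_surjective (Quotient.mk (sk k)) ?_) hIcard
    exact fun q => Quotient.exists_rep q
  let g : ∀ k : ℕ, Quotient (sk (k + 1)) → Quotient (sk k) := fun k =>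
    Quotient.lift (fun v => Quotient.mk (sk k) v)
      (fun a b h => Quotient.sound (Ek_anti T hc (Nat.le_succ k) h))
  have hgsurj : ∀ k, Function.Surjective (g k) := by
    intro k q
    obtain ⟨v, rfl⟩ := Quotient.exists_rep q
    exact ⟨Quotient.mk (sk (k + 1)) v, rfl⟩
  have hcmono : ∀ k, c k ≤ c (k + 1) := fun k =>
    Nat.card_le_card_of_surjective (g k) (hgsurj k)
  have hstab : ∀ k, k + 1 ≤ K → c (k + 1) ≤ c k → StabAt T hc k := by
    intro k hk hle
    have hbij : Function.Bijective (g k) :=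
      (Nat.bijective_iff_surjective_and_card (g k)).2
        ⟨hgsurj k, le_antisymm hle (hcmono k)⟩
    intro m1 m2 hE
    have hkK : k ≤ K := le_trans (Nat.le_succ k) hk
    set v1 : I := ⟨ι m1, Set.mem_range_self m1⟩ with hv1
    set v2 : I := ⟨ι m2, Set.mem_range_self m2⟩ with hv2
    have h1 : Ek T hc k (σ v1) (σ v2) :=
      Ek_trans T hc (Ek_symm T hc (htr k hkK m1)) (Ek_trans T hc hE (htr k hkK m2))
    have hmk : g k (Quotient.mk (sk (k + 1)) v1) = g k (Quotient.mk (sk (k + 1)) v2) :=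
      Quotient.sound h1
    have h2 := hbij.1 hmk
    have h3 : Ek T hc (k + 1) (σ v1) (σ v2) := Quotient.exact h2
    exact Ek_trans T hc (htr (k + 1) hk m1)
      (Ek_trans T hc h3 (Ek_symm T hc (htr (k + 1) hk m2)))
  -- pigeonhole: the chain stabilizes before step `n`
  haveI : Nonempty I := ⟨⟨ι [], Set.mem_range_self []⟩⟩
  haveI : Nonempty (Quotient (sk 0)) := ⟨Quotient.mk (sk 0) ⟨ι [], Set.mem_range_self []⟩⟩
  have hc0 : 1 ≤ c 0 := Nat.card_pos
  have hex : ∃ k, k < n ∧ c (k + 1) ≤ c k := by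
    by_contra hno
    push_neg at hno
    have hstrict : ∀ k, k ≤ n → k + 1 ≤ c k := by
      intro k
      induction k with
      | zero => exact fun _ => hc0
      | succ k ih =>
        intro hk
        have h1 : k + 1 ≤ c k := ih (le_trans (Nat.le_succ k) hk)
        have h2 : c k < c (k + 1) := hno k (lt_of_lt_of_le (Nat.lt_succ_self k) hk)
        omega
    have := hstrict n le_rfl
    have := hcle n
    omega
  obtain ⟨k, hkn, hkc⟩ := hex
  have hk1K : k + 1 ≤ K := by omega
  have hst : StabAt T hc k := hstab k hk1K hkc
  -- hence the generated semigroup is finite, contradiction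
  have hBeq : ∀ m : List Q, ∀ x, B T hc m x = B T hc (σ ⟨ι m, Set.mem_range_self m⟩) x :=
    fun m => StabAt.all T hc hst (htr k (by omega) m)
  apply hinf
  apply (Set.finite_range fun v : I => fun x : List A => some (B T hc (σ v) x)).subset
  rintro f ⟨l, hl, rfl⟩
  refine ⟨⟨ι l, Set.mem_range_self l⟩, ?_⟩
  funext x
  rw [act_eq T hc, hBeq l x]
end

section
/- Let ℓ > 0 and let T be the G-automaton over Σ = {0, 1, ␣} with states p, q₁, …, q_ℓ, id and transitions: p →(␣/␣) q₁, qᵢ →(␣/␣) q_{i+1} for 1 ≤ i < ℓ, q_ℓ →(1/0) p, q_ℓ →(0/1) id, q_ℓ →(␣/␣) q_ℓ, p and each qᵢ (i < ℓ) loop on 0/0 and 1/1, and id loops on 0/0, 1/1, ␣/␣. Then the shortest words on which the actions of states p and id differ are ␣^ℓ0 and ␣^ℓ1; in particular, for all words u of length at most ℓ, p∘u = id∘u. -/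
/-- The modified adding machine with parameter `ℓ`: states `Fin (ℓ + 2)` where `0` is `p`,
`1, …, ℓ` are `q₁, …, q_ℓ` and `ℓ + 1` is `id`; the alphabet is `Fin 3` where
`2` is the blank symbol `␣`. -/
def AM (ℓ : ℕ) : SAut (Fin (ℓ + 2)) (Fin 3) where
  δ q a :=
    if q.val = ℓ + 1 then some (a, q)                 -- id loops on everything
    else if q.val = ℓ then                            -- q_ℓ
      if a.val = 2 then some (a, q)                   --   ␣/␣ loop
      else if a.val = 1 then some (0, ⟨0, by omega⟩)  --   1/0 to p
      else some (1, ⟨ℓ + 1, by omega⟩)                --   0/1 to id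
    else                                              -- p and qᵢ for i < ℓ
      if a.val = 2 then some (a, ⟨min (q.val + 1) (ℓ + 1), by omega⟩) -- ␣/␣ to the next state (here q.val < ℓ, so this is q.val + 1)
      else some (a, q)                                --   0/0, 1/1 loops

lemma AM_delta_id (ℓ : ℕ) (a : Fin 3) :
    (AM ℓ).δ ⟨ℓ+1, by omega⟩ a = some (a, ⟨ℓ+1, by omega⟩) := by
  simp [AM]

lemma AM_run_id (ℓ : ℕ) (u : List (Fin 3)) :
    (AM ℓ).run ⟨ℓ+1, by omega⟩ u = some (u, ⟨ℓ+1, by omega⟩) := by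
  induction u with
  | nil => rfl
  | cons a as ih => simp [SAut.run, AM_delta_id, ih]

lemma AM_act1_id (ℓ : ℕ) (u : List (Fin 3)) :
    (AM ℓ).act1 ⟨ℓ+1, by omega⟩ u = some u := by
  simp [SAut.act1, AM_run_id]

set_option linter.unreachableTactic false in
set_option linter.unusedTactic false in
lemma AM_delta_lt (ℓ k : ℕ) (hk : k < ℓ) (a : Fin 3) :
    (AM ℓ).δ ⟨k, by omega⟩ a =
      if a.val = 2 then some (a, ⟨k+1, by omega⟩) else some (a, ⟨k, by omega⟩) := by
  simp only [AM]
  split_ifs with h1 h2 h3 <;> first | omega | (simp <;> omega) | simp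

set_option linter.unreachableTactic false in
set_option linter.unusedTactic false in
lemma AM_delta_last (ℓ : ℕ) (a : Fin 3) :
    (AM ℓ).δ ⟨ℓ, by omega⟩ a =
      if a.val = 2 then some (a, ⟨ℓ, by omega⟩)
      else if a.val = 1 then some (0, ⟨0, by omega⟩)
      else some (1, ⟨ℓ+1, by omega⟩) := by
  simp only [AM]
  split_ifs <;> first | omega | (simp <;> omega) | simp

lemma AM_run_short (ℓ : ℕ) : ∀ (u : List (Fin 3)) (k : ℕ) (hk : k + u.length ≤ ℓ),
    ∃ k' : ℕ, ∃ h : k' < ℓ + 2, k' ≤ k + u.length ∧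
      (AM ℓ).run ⟨k, by omega⟩ u = some (u, ⟨k', h⟩) := by
  intro u
  induction u with
  | nil => intro k hk; exact ⟨k, by omega, by omega, rfl⟩
  | cons a as ih =>
    intro k hk
    simp only [List.length_cons] at hk
    have hklt : k < ℓ := by omega
    by_cases ha : a.val = 2
    · obtain ⟨k', h', hle, hrun⟩ := ih (k+1) (by omega)
      exact ⟨k', h', by simp; omega,
        by simp [SAut.run, AM_delta_lt ℓ k hklt, ha, hrun]⟩
    · obtain ⟨k', h', hle, hrun⟩ := ih k (by omega)
      exact ⟨k', h', by simp; omega,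
        by simp [SAut.run, AM_delta_lt ℓ k hklt, ha, hrun]⟩

lemma AM_act1_short (ℓ : ℕ) (u : List (Fin 3)) (k : ℕ) (hk : k < ℓ + 2)
    (h : k + u.length ≤ ℓ) : (AM ℓ).act1 ⟨k, hk⟩ u = some u := by
  obtain ⟨k', h', _, hrun⟩ := AM_run_short ℓ u k h
  simp [SAut.act1, hrun]

lemma AM_run_blanks (ℓ : ℕ) : ∀ (m k : ℕ) (hk : k + m = ℓ) (a : Fin 3),
    (AM ℓ).run ⟨k, by omega⟩ (List.replicate m 2 ++ [a]) =
      if a.val = 2 then some (List.replicate m 2 ++ [a], ⟨ℓ, by omega⟩)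
      else if a.val = 1 then some (List.replicate m 2 ++ [0], ⟨0, by omega⟩)
      else some (List.replicate m 2 ++ [1], ⟨ℓ+1, by omega⟩) := by
  intro m
  induction m with
  | zero =>
    intro k hk a
    subst hk
    simp only [List.replicate_zero, List.nil_append]
    simp [SAut.run, AM_delta_last]
    split_ifs <;> simp
  | succ m ih =>
    intro k hk a
    have hklt : k < ℓ := by omega
    have := ih (k+1) (by omega) a
    simp only [List.replicate_succ, List.cons_append]
    simp only [SAut.run, AM_delta_lt ℓ k hklt]
    norm_num [this]
    split_ifs <;> simp [SAut.run]

lemma AM_diff_char (ℓ : ℕ) : ∀ (u : List (Fin 3)) (k : ℕ) (hk : k ≤ ℓ)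
    (hlen : k + u.length = ℓ + 1),
    (AM ℓ).act1 ⟨k, by omega⟩ u ≠ some u →
    u = List.replicate (ℓ - k) 2 ++ [0] ∨ u = List.replicate (ℓ - k) 2 ++ [1] := by
  intro u
  induction u with
  | nil => intro k hk hlen; simp at hlen; omega
  | cons a as ih =>
    intro k hk hlen hne
    simp only [List.length_cons] at hlen
    rcases eq_or_lt_of_le hk with heq | hlt
    · -- k = ℓ, as = []
      subst heq
      have has : as = [] := by
        have : as.length = 0 := by omega
        exact List.eq_nil_of_length_eq_zero this
      subst has
      simp only [SAut.act1, SAut.run, AM_delta_last] at hne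
      fin_cases a <;> simp_all
    · -- k < ℓ
      by_cases ha : a.val = 2
      · have ha2 : a = 2 := by fin_cases a <;> simp_all
        subst ha2
        have hne' : (AM ℓ).act1 ⟨k+1, by omega⟩ as ≠ some as := by
          intro h
          apply hne
          simp only [SAut.act1] at h ⊢
          simp only [SAut.run, AM_delta_lt ℓ k hlt]
          norm_num
          obtain ⟨⟨v, s⟩, hrun, hv⟩ := Option.map_eq_some_iff.mp h
          simp at hv
          simp [hrun, hv]
        rcases ih (k+1) (by omega) (by omega) hne' with h | h <;>
          [left; right] <;>
          · rw [h]
            have : ℓ - k = (ℓ - (k+1)) + 1 := by omega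
            rw [this, List.replicate_succ]
            simp
      · exfalso
        apply hne
        have has : (AM ℓ).act1 ⟨k, by omega⟩ as = some as :=
          AM_act1_short ℓ as k (by omega) (by omega)
        simp only [SAut.act1] at has ⊢
        simp only [SAut.run, AM_delta_lt ℓ k hlt, ha, if_false]
        obtain ⟨⟨v, s⟩, hrun, hv⟩ := Option.map_eq_some_iff.mp has
        simp at hv
        simp [hrun, hv]

/-- the shortest words on which the actions of `p` and `id` differ
are `␣^ℓ 0` and `␣^ℓ 1`; in particular `p ∘ u = id ∘ u` for all `u` of length at most `ℓ`. -/
theorem adding_machine_shortest_difference (ℓ : ℕ) (hl : 0 < ℓ) :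
    (∀ u : List (Fin 3), u.length ≤ ℓ →
      (AM ℓ).act1 ⟨0, by omega⟩ u = (AM ℓ).act1 ⟨ℓ + 1, by omega⟩ u) ∧
    (AM ℓ).act1 ⟨0, by omega⟩ (List.replicate ℓ (2 : Fin 3) ++ [0]) ≠
      (AM ℓ).act1 ⟨ℓ + 1, by omega⟩ (List.replicate ℓ (2 : Fin 3) ++ [0]) ∧
    (AM ℓ).act1 ⟨0, by omega⟩ (List.replicate ℓ (2 : Fin 3) ++ [1]) ≠
      (AM ℓ).act1 ⟨ℓ + 1, by omega⟩ (List.replicate ℓ (2 : Fin 3) ++ [1]) ∧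
    (∀ u : List (Fin 3), u.length = ℓ + 1 →
      (AM ℓ).act1 ⟨0, by omega⟩ u ≠ (AM ℓ).act1 ⟨ℓ + 1, by omega⟩ u →
      u = List.replicate ℓ (2 : Fin 3) ++ [0] ∨ u = List.replicate ℓ (2 : Fin 3) ++ [1]) := by
  refine ⟨?_, ?_, ?_, ?_⟩
  · intro u hu
    rw [AM_act1_short ℓ u 0 (by omega) (by omega), AM_act1_id]
  · rw [AM_act1_id]
    simp only [SAut.act1]
    rw [AM_run_blanks ℓ ℓ 0 (by omega) 0]
    simp
  · rw [AM_act1_id]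
    simp only [SAut.act1]
    rw [AM_run_blanks ℓ ℓ 0 (by omega) 1]
    simp
  · intro u hlen hne
    rw [AM_act1_id] at hne
    have := AM_diff_char ℓ u 0 (by omega) (by omega) hne
    simpa using this
end

section
/- For the modified adding machine G-automaton of the previous statement (with parameter ℓ > 0, |Q| = ℓ + 2), for every n ≥ 1 the word u = (␣^ℓ 0)^n satisfies: every word x with |Q*∘ux| > |Q*∘u| has length |x| ≥ ℓ + 1 = |Q| − 1. -/
theorem run_append {Q A : Type} (T : SAut Q A) (u : List A) : ∀ (q : Q) (v : List A),
    T.run q (u ++ v) =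
      (T.run q u).bind fun wr => (T.run wr.2 v).map fun vr => (wr.1 ++ vr.1, vr.2) := by
  induction u with
  | nil => intro q v; simp only [List.nil_append, SAut.run, Option.bind]; cases h : T.run q v <;> simp
  | cons a as ih =>
    intro q v
    simp only [List.cons_append, SAut.run]
    cases h : T.δ q a with
    | none => simp
    | some bp =>
      simp [ih bp.2 v]
      cases h2 : T.run bp.2 as with
      | none => simp
      | some wr => simp; cases h3 : T.run wr.2 v <;> simp

theorem run_length {Q A : Type} (T : SAut Q A) (u : List A) : ∀ (q : Q) (v : List A) (r : Q),
    T.run q u = some (v, r) → v.length = u.length := by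
  induction u with
  | nil => intro q v r h; simp [SAut.run] at h; simp [h.1.symm]
  | cons a as ih =>
    intro q v r h
    simp only [SAut.run] at h
    cases hd : T.δ q a with
    | none => simp [hd] at h
    | some bp =>
      simp [hd] at h
      cases h2 : T.run bp.2 as with
      | none => simp [h2] at h
      | some wr =>
        simp [h2] at h
        obtain ⟨w, hw, hv⟩ := h
        have := ih bp.2 wr.1 wr.2 (by rw [h2])
        rw [hw] at this
        simp [← hv, this]

/-- identity action on short words -/
theorem AM_id_short (ℓ : ℕ) : ∀ (x : List (Fin 3)) (q : Fin (ℓ + 2)),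
    (q.val + x.length ≤ ℓ ∨ q.val = ℓ + 1) →
    ∃ r : Fin (ℓ + 2), (AM ℓ).run q x = some (x, r) := by
  intro x
  induction x with
  | nil => intro q _; exact ⟨q, rfl⟩
  | cons a as ih =>
    intro q hq
    rcases hq with hq | hq
    · have h1 : q.val ≠ ℓ + 1 := by omega
      have h2 : q.val ≠ ℓ := by simp at hq; omega
      by_cases ha : a.val = 2
      · have hlt : q.val + 1 ≤ ℓ + 1 := by omega
        obtain ⟨r, hr⟩ := ih ⟨min (q.val + 1) (ℓ + 1), by omega⟩
          (by left; simp; simp at hq; omega)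
        exact ⟨r, by simp [SAut.run, AM, h1, h2, ha]; simpa [AM] using hr⟩
      · obtain ⟨r, hr⟩ := ih q (by left; simp at hq ⊢; omega)
        exact ⟨r, by simp [SAut.run, AM, h1, h2, ha]; simpa [AM] using hr⟩
    · obtain ⟨r, hr⟩ := ih q (Or.inr hq)
      exact ⟨r, by simp [SAut.run, AM, hq]; simpa [AM] using hr⟩

/-- blanks advance the state -/
theorem AM_blanks (ℓ : ℕ) : ∀ (k : ℕ) (q : Fin (ℓ + 2)),
    ∃ r : Fin (ℓ + 2), (AM ℓ).run q (List.replicate k 2) = some (List.replicate k 2, r) ∧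
      r.val = if q.val = ℓ + 1 then ℓ + 1 else min (q.val + k) ℓ := by
  intro k
  induction k with
  | zero => intro q; exact ⟨q, rfl, by split <;> omega⟩
  | succ k ih =>
    intro q
    by_cases h1 : q.val = ℓ + 1
    · obtain ⟨r, hr, hrv⟩ := ih q
      exact ⟨r, by simp [List.replicate_succ, SAut.run, AM, h1]; simpa [AM] using hr, by simp [hrv, h1]⟩
    · by_cases h2 : q.val = ℓ
      · obtain ⟨r, hr, hrv⟩ := ih q
        refine ⟨r, by simp [List.replicate_succ, SAut.run, AM, h1, h2]; simpa [AM] using hr, ?_⟩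
        simp [hrv, h1]; omega
      · obtain ⟨r, hr, hrv⟩ := ih ⟨min (q.val + 1) (ℓ + 1), by omega⟩
        refine ⟨r, by simp [List.replicate_succ, SAut.run, AM, h1, h2]; simpa [AM] using hr, ?_⟩
        have : q.val < ℓ := by omega
        simp at hrv
        rw [hrv]; split <;> omega

def Bw (ℓ : ℕ) (zs : List (Fin 3)) : List (Fin 3) :=
  (zs.map fun z => List.replicate ℓ (2 : Fin 3) ++ [z]).flatten

@[simp] theorem Bw_nil (ℓ : ℕ) : Bw ℓ [] = [] := rfl

theorem Bw_cons (ℓ : ℕ) (z : Fin 3) (zs : List (Fin 3)) :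
    Bw ℓ (z :: zs) = (List.replicate ℓ (2 : Fin 3) ++ [z]) ++ Bw ℓ zs := by
  simp [Bw]

/-- one block: from any state, reading `␣^ℓ z` with `z ∈ {0,1}` outputs `␣^ℓ z'`
with `z' ∈ {0,1}` and ends in `p` or `id`. -/
theorem AM_block (ℓ : ℕ) (q : Fin (ℓ + 2)) (z : Fin 3) (hz : z.val = 0 ∨ z.val = 1) :
    ∃ (z' : Fin 3) (r : Fin (ℓ + 2)),
      (AM ℓ).run q (List.replicate ℓ (2 : Fin 3) ++ [z]) =
        some (List.replicate ℓ (2 : Fin 3) ++ [z'], r) ∧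
      (z'.val = 0 ∨ z'.val = 1) ∧ (r.val = 0 ∨ r.val = ℓ + 1) := by
  obtain ⟨r₁, hr₁, hr₁v⟩ := AM_blanks ℓ ℓ q
  rw [run_append, hr₁]
  by_cases h1 : q.val = ℓ + 1
  · simp [h1] at hr₁v
    refine ⟨z, r₁, ?_, hz, Or.inr hr₁v⟩
    have hz2 : z.val ≠ 2 := by omega
    simp [SAut.run, AM, hr₁v, hz2]
  · simp [h1] at hr₁v
    have hrl : r₁.val = ℓ := by omega
    have hne : r₁.val ≠ ℓ + 1 := by omega
    rcases hz with hz | hz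
    · refine ⟨1, ⟨ℓ + 1, by omega⟩, ?_, Or.inr rfl, Or.inr rfl⟩
      have : z.val ≠ 2 := by omega
      have : z.val ≠ 1 := by omega
      simp [SAut.run, AM, hrl, hne, *]
    · refine ⟨0, ⟨0, by omega⟩, ?_, Or.inl rfl, Or.inl rfl⟩
      have : z.val ≠ 2 := by omega
      simp [SAut.run, AM, hrl, hne, hz, *]

/-- whole word: reading `Bw ℓ zs` from any state outputs `Bw ℓ vs` and, if `zs` is
nonempty, ends in `p` or `id`. -/
theorem AM_word (ℓ : ℕ) : ∀ (zs : List (Fin 3)) (q : Fin (ℓ + 2)),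
    (∀ z ∈ zs, z.val = 0 ∨ z.val = 1) →
    ∃ (vs : List (Fin 3)) (r : Fin (ℓ + 2)),
      (AM ℓ).run q (Bw ℓ zs) = some (Bw ℓ vs, r) ∧
      (∀ z ∈ vs, z.val = 0 ∨ z.val = 1) ∧ vs.length = zs.length ∧
      (zs ≠ [] → r.val = 0 ∨ r.val = ℓ + 1) := by
  intro zs
  induction zs with
  | nil => intro q _; exact ⟨[], q, rfl, by simp, rfl, by simp⟩
  | cons z zs ih =>
    intro q hgood
    obtain ⟨z', r₁, hrun₁, hz', hr₁⟩ := AM_block ℓ q z (hgood z (by simp))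
    obtain ⟨vs, r, hrun₂, hvs, hlen, hrend⟩ := ih r₁ (fun w hw => hgood w (by simp [hw]))
    have hr : r.val = 0 ∨ r.val = ℓ + 1 := by
      cases zs with
      | nil =>
        simp only [Bw_nil, SAut.run, Option.some.injEq, Prod.mk.injEq] at hrun₂
        rw [← hrun₂.2]; exact hr₁
      | cons w ws => exact hrend (by simp)
    refine ⟨z' :: vs, r, ?_, ?_, by simpa using hlen, fun _ => hr⟩
    · rw [Bw_cons, Bw_cons, run_append, hrun₁]
      simp [hrun₂]
    · intro w hw
      rcases List.mem_cons.mp hw with h | h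
      · rw [h]; exact hz'
      · exact hvs w h

theorem act_length {Q A : Type} (T : SAut Q A) : ∀ (l : List Q) (u v : List A),
    T.act l u = some v → v.length = u.length := by
  intro l
  induction l with
  | nil => intro u v h; simp [SAut.act] at h; rw [h]
  | cons q l ih =>
    intro u v h
    simp only [SAut.act, SAut.act1, Option.bind] at h
    cases hr : T.run q u with
    | none => simp [hr] at h
    | some wr =>
      simp [hr] at h
      have h1 := run_length T u q wr.1 wr.2 (by rw [hr])
      have h2 := ih wr.1 v h
      omega

/-- main lemma: for short `x`, the action on `Bw ℓ zs ++ x` splits. -/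
theorem AM_split (ℓ : ℕ) : ∀ (l : List (Fin (ℓ + 2))) (zs x y : List (Fin 3)),
    (∀ z ∈ zs, z.val = 0 ∨ z.val = 1) → zs ≠ [] → x.length ≤ ℓ →
    (AM ℓ).act l (Bw ℓ zs ++ x) = some y →
    ∃ vs : List (Fin 3), (∀ z ∈ vs, z.val = 0 ∨ z.val = 1) ∧ vs.length = zs.length ∧
      (AM ℓ).act l (Bw ℓ zs) = some (Bw ℓ vs) ∧ y = Bw ℓ vs ++ x := by
  intro l
  induction l with
  | nil =>
    intro zs x y hzs hne hx h
    simp [SAut.act] at h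
    exact ⟨zs, hzs, rfl, rfl, h.symm⟩
  | cons q l ih =>
    intro zs x y hzs hne hx h
    obtain ⟨vs₁, r, hrun₁, hvs₁, hlen₁, hr⟩ := AM_word ℓ zs q hzs
    have hr := hr hne
    obtain ⟨r', hrun₂⟩ := AM_id_short ℓ x r (by omega)
    have hact1 : (AM ℓ).act1 q (Bw ℓ zs ++ x) = some (Bw ℓ vs₁ ++ x) := by
      simp [SAut.act1, run_append, hrun₁, hrun₂]
    simp only [SAut.act, hact1, Option.bind_some] at h
    have hne₁ : vs₁ ≠ [] := by
      intro hc; rw [hc] at hlen₁; exact hne (List.length_eq_zero_iff.mp hlen₁.symm)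
    obtain ⟨vs, hvs, hlen, hact, hy⟩ := ih vs₁ x y hvs₁ hne₁ hx h
    refine ⟨vs, hvs, by omega, ?_, hy⟩
    have hact1' : (AM ℓ).act1 q (Bw ℓ zs) = some (Bw ℓ vs₁) := by
      simp [SAut.act1, hrun₁]
    simp only [SAut.act, hact1', Option.bind_some]
    exact hact


/-- for every `n ≥ 1`, the word `(␣^ℓ 0)^n` is only expandable by words
of length at least `ℓ + 1 = |Q| - 1`. -/
theorem adding_machine_lower_bound (ℓ : ℕ) (hl : 0 < ℓ) (n : ℕ) (hn : 1 ≤ n) :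
    ∀ x : List (Fin 3),
      ((AM ℓ).orbit
          ((List.replicate n (List.replicate ℓ (2 : Fin 3) ++ [(0 : Fin 3)])).flatten ++ x)).ncard >
        ((AM ℓ).orbit
          ((List.replicate n (List.replicate ℓ (2 : Fin 3) ++ [(0 : Fin 3)])).flatten)).ncard →
      ℓ + 1 ≤ x.length := by
  intro x h
  by_contra hx
  push_neg at hx
  have hxl : x.length ≤ ℓ := by omega
  set U := (List.replicate n (List.replicate ℓ (2 : Fin 3) ++ [(0 : Fin 3)])).flatten with hU
  have hUB : U = Bw ℓ (List.replicate n 0) := by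
    simp [hU, Bw, List.map_replicate]
  have hsub : (AM ℓ).orbit (U ++ x) ⊆ (fun w => w ++ x) '' (AM ℓ).orbit U := by
    rintro y ⟨l, hl⟩
    obtain ⟨vs, _, _, hact, hy⟩ := AM_split ℓ l (List.replicate n 0) x y
      (by intro z hz; rw [List.eq_of_mem_replicate hz]; left; rfl)
      (by simp; omega) hxl (by rw [← hUB]; exact hl)
    exact ⟨Bw ℓ vs, ⟨l, by rw [hUB]; exact hact⟩, hy.symm⟩
  have hfin : ((AM ℓ).orbit U).Finite :=
    (List.finite_length_eq (Fin 3) U.length).subset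
      (fun v hv => by obtain ⟨l, hl⟩ := hv; exact act_length _ l U v hl)
  have h1 := Set.ncard_le_ncard hsub (hfin.image _)
  rw [Set.ncard_image_of_injective _ (List.append_left_injective x)] at h1
  omega
end
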